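/- Let r ≥ 2 be an even integer, let k ≥ r be an integer and p ≥ r be a real number. If G_w is a weighted k-partite r-graph (with at least one edge of nonzero weight), then λ^(p)(G_w) · λ_min^(p)(K_k^r) ≥ k^{1−r/p} · (k−1)(k−2)⋯(k−r+1) · λ_min^(p)(G_w). -/

import Mathlib

open Finset

/-- Polynomial form of a weighted `r`-graph with edge set `E` and weights `w`:
`P(x) = r! * ∑_{e ∈ E} w(e) * ∏_{i ∈ e} x i`. -/
noncomputable def polyForm (r : ℕ) {V : Type*} (E : Finset (Finset V))
    (w : Finset V → ℝ) (x : V → ℝ) : ℝ :=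
  (r.factorial : ℝ) * ∑ e ∈ E, w e * ∏ i ∈ e, x i

/-- The ℓ^p norm of a vector. -/
noncomputable def lpNorm (p : ℝ) {V : Type*} [Fintype V] (x : V → ℝ) : ℝ :=
  (∑ i, |x i| ^ p) ^ (1 / p)

/-- `λ^(p)(G_w)`: the maximum of the polynomial form over the unit ℓ^p sphere. -/
noncomputable def lamMax (r : ℕ) (p : ℝ) {V : Type*} [Fintype V]
    (E : Finset (Finset V)) (w : Finset V → ℝ) : ℝ :=
  sSup {t | ∃ x : V → ℝ, lpNorm p x = 1 ∧ polyForm r E w x = t}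

/-- `λ_min^(p)(G_w)`: the minimum of the polynomial form over the unit ℓ^p sphere. -/
noncomputable def lamMin (r : ℕ) (p : ℝ) {V : Type*} [Fintype V]
    (E : Finset (Finset V)) (w : Finset V → ℝ) : ℝ :=
  sInf {t | ∃ x : V → ℝ, lpNorm p x = 1 ∧ polyForm r E w x = t}

/-- Edge set of the complete `r`-graph `K_k^r` on vertex set `Fin k`. -/
def completeEdges (r k : ℕ) : Finset (Finset (Fin k)) :=
  Finset.univ.powersetCard r
/-!
Fix unit vectors `x` on the vertices of `G` and `u` on `[k]`, and a `k`-partition map `η`.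
For a permutation `σ` of `[k]` put `z_σ = x ⊙ (u ∘ σ ∘ η)`; homogeneity gives
`λ_min(G) |z_σ|_p^r ≤ P_G(z_σ)`. Since each edge of `G` meets every part at most once, averaging
over `σ` turns `∑_σ P_G(z_σ)` into a multiple of `P_G(x) P_{K_k^r}(u)`, while
`∑_σ |z_σ|_p^p = (k-1)!`. The power-mean inequality (`r ≤ p`) bounds `∑_σ |z_σ|_p^r`, and
`λ_min(G) ≤ 0` turns this into `k^{1-r/p} (k-1)⋯(k-r+1) λ_min(G) ≤ P_G(x) P_{K_k^r}(u)`.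
Taking the infimum over `u` and the supremum over `x` gives the theorem.
-/

section LpNorm
variable {V : Type*} [Fintype V] {p : ℝ}

lemma lpNorm_nonneg (x : V → ℝ) : 0 ≤ lpNorm p x := by
  unfold lpNorm; positivity

lemma lpNorm_rpow (hp : 0 < p) (x : V → ℝ) : lpNorm p x ^ p = ∑ i, |x i| ^ p := by
  rw [lpNorm, ← Real.rpow_mul (by positivity), one_div_mul_cancel hp.ne', Real.rpow_one]

lemma sum_abs_rpow_eq_one (hp : 0 < p) {x : V → ℝ} (hx : lpNorm p x = 1) :
    ∑ i, |x i| ^ p = 1 := by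
  rw [← lpNorm_rpow hp, hx, Real.one_rpow]

lemma lpNorm_const_mul (hp : 0 < p) {c : ℝ} (hc : 0 ≤ c) (x : V → ℝ) :
    lpNorm p (fun i => c * x i) = c * lpNorm p x := by
  simp only [lpNorm, abs_mul, abs_of_nonneg hc, Real.mul_rpow hc (abs_nonneg _), ← mul_sum]
  rw [Real.mul_rpow (by positivity) (by positivity), ← Real.rpow_mul hc,
    mul_one_div_cancel hp.ne', Real.rpow_one]

lemma eq_zero_of_lpNorm_eq_zero (hp : 0 < p) {x : V → ℝ} (h : lpNorm p x = 0) : x = 0 := by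
  have hsum : ∑ i, |x i| ^ p = 0 := by rw [← lpNorm_rpow hp, h, Real.zero_rpow hp.ne']
  funext i
  have hi := (sum_eq_zero_iff_of_nonneg fun j _ => by positivity).1 hsum i (mem_univ i)
  simpa [Real.rpow_eq_zero (abs_nonneg _) hp.ne'] using hi

lemma abs_le_one_of_lpNorm_eq_one (hp : 0 < p) {x : V → ℝ} (hx : lpNorm p x = 1) (i : V) :
    |x i| ≤ 1 := by
  have h : |x i| ^ p ≤ 1 := sum_abs_rpow_eq_one hp hx ▸
    single_le_sum (f := fun j => |x j| ^ p) (fun j _ => by positivity) (mem_univ i)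
  rwa [← Real.one_rpow p, Real.rpow_le_rpow_iff (abs_nonneg _) zero_le_one hp] at h
end LpNorm

section PolyForm
variable {V : Type*} {r : ℕ} {E : Finset (Finset V)} {w : Finset V → ℝ}

lemma polyForm_const_mul (hunif : ∀ e ∈ E, e.card = r) (c : ℝ) (x : V → ℝ) :
    polyForm r E w (fun i => c * x i) = c ^ r * polyForm r E w x := by
  rw [polyForm, polyForm, mul_left_comm, mul_sum E _ (c ^ r)]
  congr 1
  refine sum_congr rfl fun e he => ?_
  rw [prod_mul_distrib, prod_const, hunif e he]
  ring

lemma polyForm_zero (hr : 0 < r) (hunif : ∀ e ∈ E, e.card = r) : polyForm r E w 0 = 0 := by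
  refine mul_eq_zero_of_right _ (sum_eq_zero fun e he => ?_)
  simp [hunif e he, hr.ne']

variable [Fintype V] {p : ℝ}

lemma abs_polyForm_le (hp : 0 < p) {x : V → ℝ} (hx : lpNorm p x = 1) :
    |polyForm r E w x| ≤ r.factorial * ∑ e ∈ E, |w e| := by
  rw [polyForm, abs_mul, Nat.abs_cast]
  gcongr
  refine (abs_sum_le_sum_abs _ _).trans (sum_le_sum fun e _ => ?_)
  rw [abs_mul, abs_prod]
  exact mul_le_of_le_one_right (abs_nonneg _)
    (prod_le_one (fun i _ => abs_nonneg _) fun i _ => abs_le_one_of_lpNorm_eq_one hp hx i)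

lemma bddBelow_polyForm_sphere (hp : 0 < p) :
    BddBelow {t | ∃ x : V → ℝ, lpNorm p x = 1 ∧ polyForm r E w x = t} := by
  refine ⟨-(r.factorial * ∑ e ∈ E, |w e|), ?_⟩
  rintro t ⟨x, hx, rfl⟩
  exact neg_le_of_abs_le (abs_polyForm_le hp hx)

lemma lamMin_le_polyForm (hp : 0 < p) {x : V → ℝ} (hx : lpNorm p x = 1) :
    lamMin r p E w ≤ polyForm r E w x :=
  csInf_le (bddBelow_polyForm_sphere hp) ⟨x, hx, rfl⟩

lemma lamMin_nonpos (hp : 0 < p) (hE : ∀ e ∈ E, 2 ≤ e.card) : lamMin r p E w ≤ 0 := by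
  classical
  cases isEmpty_or_nonempty V with
  | inl _ =>
    have : {t | ∃ x : V → ℝ, lpNorm p x = 1 ∧ polyForm r E w x = t} = ∅ := by
      ext t
      simp [lpNorm, Real.zero_rpow (inv_pos.2 hp).ne']
    rw [lamMin, this, Real.sInf_empty]
  | inr h =>
    obtain ⟨v⟩ := h
    -- a coordinate vector vanishes on every edge with two or more vertices
    have hx : lpNorm p (Pi.single v 1) = 1 := by
      simp [lpNorm, apply_ite, Real.zero_rpow hp.ne', Pi.single_apply]
    refine (lamMin_le_polyForm hp hx).trans_eq ?_
    refine mul_eq_zero_of_right _ (sum_eq_zero fun e he => ?_)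
    obtain ⟨j, hj, hjv⟩ := exists_mem_ne (hE e he) v
    rw [prod_eq_zero hj (Pi.single_eq_of_ne hjv 1), mul_zero]

lemma lamMin_mul_lpNorm_pow_le (hp : 0 < p) (hr : 0 < r) (hunif : ∀ e ∈ E, e.card = r)
    (x : V → ℝ) : lamMin r p E w * lpNorm p x ^ r ≤ polyForm r E w x := by
  rcases (lpNorm_nonneg x).eq_or_lt with h0 | hpos
  · rw [← h0, eq_zero_of_lpNorm_eq_zero hp h0.symm, polyForm_zero hr hunif, zero_pow hr.ne',
      mul_zero]
  have hunit : lpNorm p (fun i => (lpNorm p x)⁻¹ * x i) = 1 := by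
    rw [lpNorm_const_mul hp (inv_nonneg.2 hpos.le), inv_mul_cancel₀ hpos.ne']
  have h := lamMin_le_polyForm (r := r) (E := E) (w := w) hp hunit
  rw [polyForm_const_mul hunif, inv_pow, inv_mul_eq_div, le_div_iff₀ (by positivity)] at h
  exact h
end PolyForm

lemma sum_rpow_le_card_rpow_mul_sum_rpow {ι : Type*} (s : Finset ι) {f : ι → ℝ}
    (hf : ∀ i ∈ s, 0 ≤ f i) {r p : ℝ} (hr : 0 < r) (hrp : r ≤ p) :
    ∑ i ∈ s, f i ^ r ≤ (#s : ℝ) ^ (1 - r / p) * (∑ i ∈ s, f i ^ p) ^ (r / p) := by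
  have hp : 0 < p := hr.trans_le hrp
  have hq : 1 ≤ p / r := (one_le_div hr).2 hrp
  have hpow : ∀ i ∈ s, (f i ^ r) ^ (p / r) = f i ^ p := fun i hi => by
    rw [← Real.rpow_mul (hf i hi), mul_div_cancel₀ _ hr.ne']
  have h := Real.rpow_sum_le_const_mul_sum_rpow_of_nonneg s hq
    (f := fun i => f i ^ r) fun i hi => Real.rpow_nonneg (hf i hi) r
  rw [sum_congr rfl hpow] at h
  have hS : 0 ≤ ∑ i ∈ s, f i ^ r := sum_nonneg fun i hi => Real.rpow_nonneg (hf i hi) r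
  calc ∑ i ∈ s, f i ^ r = ((∑ i ∈ s, f i ^ r) ^ (p / r)) ^ (r / p) := by
        rw [← Real.rpow_mul hS, div_mul_div_comm, mul_comm p, div_self (by positivity),
          Real.rpow_one]
    _ ≤ ((#s : ℝ) ^ (p / r - 1) * ∑ i ∈ s, f i ^ p) ^ (r / p) := by gcongr
    _ = (#s : ℝ) ^ (1 - r / p) * (∑ i ∈ s, f i ^ p) ^ (r / p) := by
        rw [Real.mul_rpow (by positivity) (sum_nonneg fun i hi => Real.rpow_nonneg (hf i hi) p),
          ← Real.rpow_mul (by positivity)]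
        congr 2
        field_simp

section PermSum
variable {α R : Type*} [CommSemiring R]

lemma Finset.exists_perm_image_eq [DecidableEq α] {S T : Finset α} (h : S.card = T.card) :
    ∃ τ : Equiv.Perm α, S.image τ = T := by
  obtain ⟨τ, hτ⟩ := (Set.powersetCard.isPretransitive (α := α) (n := T.card)).exists_smul_eq
    ⟨S, h⟩ ⟨T, rfl⟩
  exact ⟨τ, by simpa [smul_finset_def] using congrArg Subtype.val hτ⟩

variable [Fintype α]

lemma sum_powersetCard_prod_perm (u : α → R) (σ : Equiv.Perm α) (m : ℕ) :
    ∑ T ∈ univ.powersetCard m, ∏ j ∈ T, u (σ j) = ∑ T ∈ univ.powersetCard m, ∏ j ∈ T, u j := by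
  conv_rhs => rw [← map_univ_equiv σ, powersetCard_map, sum_map]
  simp [prod_map]

variable [DecidableEq α]

lemma sum_perm_prod_eq_of_card_eq (u : α → R) {S T : Finset α} (h : S.card = T.card) :
    ∑ σ : Equiv.Perm α, ∏ j ∈ S, u (σ j) = ∑ σ : Equiv.Perm α, ∏ j ∈ T, u (σ j) := by
  obtain ⟨τ, rfl⟩ := exists_perm_image_eq h
  refine Fintype.sum_equiv (Equiv.mulRight τ⁻¹) _ _ fun σ => ?_
  rw [prod_image fun a _ b _ hab => τ.injective hab]
  simp

lemma sum_perm_prod_mul_choose (u : α → R) {S : Finset α} {m : ℕ} (hS : S.card = m) :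
    (∑ σ : Equiv.Perm α, ∏ j ∈ S, u (σ j)) * (Fintype.card α).choose m =
      (Fintype.card α).factorial * ∑ T ∈ univ.powersetCard m, ∏ j ∈ T, u j := by
  calc (∑ σ : Equiv.Perm α, ∏ j ∈ S, u (σ j)) * (Fintype.card α).choose m
      = ∑ T ∈ univ.powersetCard m, ∑ σ : Equiv.Perm α, ∏ j ∈ T, u (σ j) := by
        rw [sum_congr rfl fun T hT => sum_perm_prod_eq_of_card_eq u
          ((mem_powersetCard_univ.1 hT).trans hS.symm), sum_const,
          card_powersetCard, card_univ, nsmul_eq_mul, mul_comm]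
    _ = _ := by
        rw [sum_comm, sum_congr rfl fun σ _ => sum_powersetCard_prod_perm u σ m,
          sum_const, card_univ, Fintype.card_perm, nsmul_eq_mul]

lemma sum_perm_apply_mul_card (f : α → R) (a : α) :
    (∑ σ : Equiv.Perm α, f (σ a)) * Fintype.card α = (Fintype.card α).factorial * ∑ j, f j := by
  simpa [powersetCard_one] using sum_perm_prod_mul_choose f (card_singleton a)

end PermSum

lemma cast_descFactorial_eq_mul_prod_Icc {k r : ℕ} (hr : 0 < r) (hkr : r ≤ k) :
    (k.descFactorial r : ℝ) = k * ∏ i ∈ Icc 1 (r - 1), ((k : ℝ) - i) := by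
  have hI : Icc 1 (r - 1) = Ico 1 r := by ext; simp only [mem_Icc, mem_Ico]; omega
  rw [Nat.descFactorial_eq_prod_range, Nat.cast_prod, prod_range_eq_mul_Ico _ hr, hI,
    Nat.sub_zero]
  refine congrArg _ (prod_congr rfl fun i hi => ?_)
  exact Nat.cast_sub ((mem_Ico.1 hi).2.le.trans hkr)

lemma sum_perm_prod_mul_descFactorial {k r : ℕ} (u : Fin k → ℝ) {S : Finset (Fin k)}
    (hS : S.card = r) :
    (∑ σ : Equiv.Perm (Fin k), ∏ j ∈ S, u (σ j)) * k.descFactorial r =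
      k.factorial * polyForm r (completeEdges r k) (fun _ => 1) u := by
  have h := sum_perm_prod_mul_choose u hS
  rw [Fintype.card_fin] at h
  rw [Nat.descFactorial_eq_factorial_mul_choose, Nat.cast_mul, mul_comm (r.factorial : ℝ),
    ← mul_assoc, h, polyForm, completeEdges]
  simp only [one_mul]
  ring

section PermutationAverage
variable {V : Type*} {k r : ℕ} {E : Finset (Finset V)} {w : Finset V → ℝ}
  {η : V → Fin k}

lemma sum_perm_polyForm_mul_comp_mul_descFactorial (hunif : ∀ e ∈ E, e.card = r)
    (hη : ∀ e ∈ E, Set.InjOn η e) (x : V → ℝ) (u : Fin k → ℝ) :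
    (∑ σ : Equiv.Perm (Fin k), polyForm r E w (x * (u ∘ σ ∘ η))) * k.descFactorial r =
      k.factorial * polyForm r E w x * polyForm r (completeEdges r k) (fun _ => 1) u := by
  have hedge : ∀ e ∈ E, (∑ σ : Equiv.Perm (Fin k), ∏ i ∈ e, (x * (u ∘ σ ∘ η)) i) *
      k.descFactorial r =
        (∏ i ∈ e, x i) * (k.factorial * polyForm r (completeEdges r k) (fun _ => 1) u) := by
    intro e he
    simp only [Pi.mul_apply, Function.comp_apply, prod_mul_distrib, ← mul_sum]
    rw [mul_assoc, ← sum_perm_prod_mul_descFactorial u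
      ((card_image_of_injOn (hη e he)).trans (hunif e he))]
    simp only [prod_image (hη e he)]
  calc (∑ σ : Equiv.Perm (Fin k), polyForm r E w (x * (u ∘ σ ∘ η))) * k.descFactorial r
      = r.factorial * ∑ e ∈ E, w e * ((∑ σ : Equiv.Perm (Fin k),
          ∏ i ∈ e, (x * (u ∘ σ ∘ η)) i) * k.descFactorial r) := by
        simp only [polyForm]
        rw [← mul_sum, sum_comm]
        simp only [← mul_sum, mul_assoc, sum_mul]
    _ = k.factorial * polyForm r E w x * polyForm r (completeEdges r k) (fun _ => 1) u := by
        rw [sum_congr rfl fun e he => by rw [hedge e he]]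
        simp only [polyForm, ← mul_assoc, ← sum_mul]
        ring

variable [Fintype V] {p : ℝ}

lemma sum_perm_lpNorm_mul_comp_rpow_mul (hp : 0 < p) (x : V → ℝ) (u : Fin k → ℝ) :
    (∑ σ : Equiv.Perm (Fin k), lpNorm p (x * (u ∘ σ ∘ η)) ^ p) * k =
      k.factorial * lpNorm p x ^ p * lpNorm p u ^ p := by
  simp only [lpNorm_rpow hp, Pi.mul_apply, Function.comp_apply, abs_mul,
    Real.mul_rpow (abs_nonneg _) (abs_nonneg _)]
  rw [sum_comm, sum_mul, mul_right_comm, mul_sum]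
  refine sum_congr rfl fun i _ => ?_
  have h := sum_perm_apply_mul_card (fun j => |u j| ^ p) (η i)
  rw [Fintype.card_fin] at h
  rw [← mul_sum, mul_assoc, h]
  ring

lemma lamMin_mul_le_polyForm_mul_polyForm (hr : 2 ≤ r) (hkr : r ≤ k) (hp : (r : ℝ) ≤ p)
    (hunif : ∀ e ∈ E, e.card = r) (hη : ∀ e ∈ E, Set.InjOn η e)
    {x : V → ℝ} (hx : lpNorm p x = 1) {u : Fin k → ℝ} (hu : lpNorm p u = 1) :
    (k : ℝ) ^ (-(r / p)) * k.descFactorial r * lamMin r p E w ≤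
      polyForm r E w x * polyForm r (completeEdges r k) (fun _ => 1) u := by
  have hr0 : (0 : ℝ) < r := by exact_mod_cast (by omega : 0 < r)
  have hp0 : 0 < p := hr0.trans_le hp
  have hk0 : (0 : ℝ) < k := by exact_mod_cast (by omega : 0 < k)
  have hkf : (0 : ℝ) < k.factorial := by exact_mod_cast k.factorial_pos
  set N : Equiv.Perm (Fin k) → ℝ := fun σ => lpNorm p (x * (u ∘ σ ∘ η))
  have hNp : ∑ σ, N σ ^ p = k.factorial / k := by
    rw [eq_div_iff hk0.ne', sum_perm_lpNorm_mul_comp_rpow_mul hp0, hx, hu]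
    simp
  have hNr : ∑ σ, N σ ^ r ≤ k.factorial * (k : ℝ) ^ (-(r / p)) := by
    have h := sum_rpow_le_card_rpow_mul_sum_rpow univ (f := N) (fun σ _ => lpNorm_nonneg _)
      hr0 hp
    simp only [Real.rpow_natCast, card_univ, Fintype.card_perm, Fintype.card_fin] at h
    refine h.trans_eq ?_
    rw [hNp, Real.div_rpow hkf.le hk0.le, Real.rpow_neg hk0.le, mul_div_assoc', ← div_eq_mul_inv,
      ← Real.rpow_add hkf, sub_add_cancel, Real.rpow_one]
  have hL := lamMin_nonpos (r := r) (w := w) hp0 fun e he => (hunif e he).symm ▸ hr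
  have hD : (0 : ℝ) ≤ k.descFactorial r := Nat.cast_nonneg _
  refine le_of_mul_le_mul_left ?_ hkf
  calc (k.factorial : ℝ) * ((k : ℝ) ^ (-(r / p)) * k.descFactorial r * lamMin r p E w)
      = (k.factorial * (k : ℝ) ^ (-(r / p))) * lamMin r p E w * k.descFactorial r := by ring
    _ ≤ (∑ σ, N σ ^ r) * lamMin r p E w * k.descFactorial r := by
        gcongr ?_ * _
        exact mul_le_mul_of_nonpos_right hNr hL
    _ = (∑ σ, lamMin r p E w * N σ ^ r) * k.descFactorial r := by
        rw [mul_comm (∑ σ, N σ ^ r), mul_sum]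
    _ ≤ (∑ σ : Equiv.Perm (Fin k), polyForm r E w (x * (u ∘ σ ∘ η))) * k.descFactorial r := by
        gcongr with σ
        exact lamMin_mul_lpNorm_pow_le hp0 (by omega) hunif _
    _ = k.factorial * (polyForm r E w x * polyForm r (completeEdges r k) (fun _ => 1) u) := by
        rw [sum_perm_polyForm_mul_comp_mul_descFactorial hunif hη, mul_assoc]
end PermutationAverage

lemma le_sSup_mul_sInf {A B : Set ℝ} {d : ℝ} (hd : d ≤ 0) (hB : sInf B ≤ 0)
    (h : ∀ a ∈ A, ∀ b ∈ B, d ≤ a * b) : d ≤ sSup A * sInf B := by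
  rcases hB.eq_or_lt with hB0 | hBneg
  · rwa [hB0, mul_zero]
  have hBne : B.Nonempty := Set.nonempty_iff_ne_empty.2 fun hB => by
    simp [hB] at hBneg
  have hbound : 0 ≤ d / sInf B := div_nonneg_of_nonpos hd hBneg.le
  suffices sSup A ≤ d / sInf B from (le_div_iff_of_neg hBneg).1 this
  refine Real.sSup_le (fun a ha => ?_) hbound
  rcases le_or_gt a 0 with ha0 | ha0
  · exact ha0.trans hbound
  have hda : d / a ≤ sInf B := le_csInf hBne fun b hb => (div_le_iff₀' ha0).2 (h a ha b hb)
  rw [le_div_iff_of_neg hBneg, ← div_le_iff₀' ha0]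
  exact hda

theorem lamMax_mul_lamMin_complete_ge_general (r k n : ℕ) (p : ℝ)
    (hr2 : 2 ≤ r) (hkr : r ≤ k) (hp : (r : ℝ) ≤ p)
    (E : Finset (Finset (Fin n))) (w : Finset (Fin n) → ℝ)
    (hunif : ∀ e ∈ E, e.card = r)
    (hpart : ∃ η : Fin n → Fin k, ∀ e ∈ E, Set.InjOn η (e : Set (Fin n))) :
    lamMax r p E w * lamMin r p (completeEdges r k) (fun _ => 1) ≥
      (k : ℝ) ^ (1 - (r : ℝ) / p) * (∏ i ∈ Finset.Icc 1 (r - 1), ((k : ℝ) - (i : ℝ))) *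
        lamMin r p E w := by
  obtain ⟨η, hη⟩ := hpart
  have hp0 : 0 < p := lt_of_lt_of_le (by exact_mod_cast (by omega : 0 < r)) hp
  have hconst : (k : ℝ) ^ (1 - (r : ℝ) / p) * ∏ i ∈ Icc 1 (r - 1), ((k : ℝ) - i) =
      (k : ℝ) ^ (-(r / p)) * k.descFactorial r := by
    rw [cast_descFactorial_eq_mul_prod_Icc (by omega) hkr, ← mul_assoc, ← Real.rpow_add_one
      (by exact_mod_cast (by omega : k ≠ 0)), neg_add_eq_sub]
  rw [ge_iff_le, hconst]
  refine le_sSup_mul_sInf ?_ (lamMin_nonpos hp0 fun T hT => ?_) ?_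
  · exact mul_nonpos_of_nonneg_of_nonpos (by positivity)
      (lamMin_nonpos hp0 fun e he => (hunif e he).symm ▸ hr2)
  · rwa [(mem_powersetCard_univ.1 hT)]
  · rintro _ ⟨x, hx, rfl⟩ _ ⟨u, hu, rfl⟩
    exact lamMin_mul_le_polyForm_mul_polyForm hr2 hkr hp hunif hη hx hu

/-- Inequality (8) of the paper: for a weighted `k`-partite `r`-graph `G_w` with at
least one edge of nonzero weight, `r ≥ 2` even, `k ≥ r`, `p ≥ r`:
`λ^(p)(G_w) · λ_min^(p)(K_k^r) ≥ k^{1-r/p} (k-1)⋯(k-r+1) · λ_min^(p)(G_w)`. -/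
theorem lamMax_mul_lamMin_complete_ge (r k n : ℕ) (p : ℝ)
    (hr2 : 2 ≤ r) (hre : Even r) (hkr : r ≤ k) (hp : (r : ℝ) ≤ p)
    (E : Finset (Finset (Fin n))) (w : Finset (Fin n) → ℝ)
    (hunif : ∀ e ∈ E, e.card = r)
    (hpart : ∃ η : Fin n → Fin k, ∀ e ∈ E, Set.InjOn η (e : Set (Fin n)))
    (hw : ∃ e ∈ E, w e ≠ 0) :
    lamMax r p E w * lamMin r p (completeEdges r k) (fun _ => 1) ≥
      (k : ℝ) ^ (1 - (r : ℝ) / p) * (∏ i ∈ Finset.Icc 1 (r - 1), ((k : ℝ) - (i : ℝ))) *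
        lamMin r p E w :=
  lamMax_mul_lamMin_complete_ge_general r k n p hr2 hkr hp E w hunif hpart
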